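/- Fix a directed graph C and a phase space function 𝒫: C₀ → Euc. Let φ: Γ → Γ' be an étale map of finite graphs over C and w ∈ 𝕍(Γ') a virtual groupoid-invariant vector field. Then the vector fields S_{Γ'}(w) on ℙΓ'₀ and S_Γ(𝕍(φ)w) on ℙΓ₀ are ℙφ-related: since ℙφ is linear, ℙφ(S_{Γ'}(w)(x)) = S_Γ(𝕍(φ)w)(ℙφ(x)) for every point x ∈ ℙΓ'₀; i.e. ℙφ: (ℙΓ'₀, S_{Γ'}(w)) → (ℙΓ₀, S_Γ(𝕍(φ)w)) is a map of dynamical systems. -/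

import Mathlib

/-- A directed graph: a set of edges, a set of nodes, and source/target maps. -/
structure DGraph : Type 1 where
  V : Type
  E : Type
  s : E → V
  t : E → V

/-- A map of directed graphs. -/
@[ext]
structure GraphMap (G G' : DGraph) where
  vMap : G.V → G'.V
  eMap : G.E → G'.E
  hs : ∀ e, G'.s (eMap e) = vMap (G.s e)
  ht : ∀ e, G'.t (eMap e) = vMap (G.t e)

namespace GraphMap

def id (G : DGraph) : GraphMap G G :=
  ⟨fun v => v, fun e => e, fun _ => rfl, fun _ => rfl⟩

def comp {G₁ G₂ G₃ : DGraph} (g : GraphMap G₂ G₃) (f : GraphMap G₁ G₂) :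
    GraphMap G₁ G₃ where
  vMap v := g.vMap (f.vMap v)
  eMap e := g.eMap (f.eMap e)
  hs e := by rw [g.hs, f.hs]
  ht e := by rw [g.ht, f.ht]

end GraphMap

/-- A graph colored by the graph `C`, i.e. a graph together with a map of graphs to `C`. -/
structure CGraph (C : DGraph) : Type 1 where
  gr : DGraph
  col : GraphMap gr C

/-- A map of graphs over `C`. -/
@[ext]
structure CMap {C : DGraph} (Γ Γ' : CGraph C) where
  toMap : GraphMap Γ.gr Γ'.gr
  hv : ∀ v, Γ'.col.vMap (toMap.vMap v) = Γ.col.vMap v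
  he : ∀ e, Γ'.col.eMap (toMap.eMap e) = Γ.col.eMap e

namespace CMap

variable {C : DGraph}

def id (Γ : CGraph C) : CMap Γ Γ := ⟨GraphMap.id _, fun _ => rfl, fun _ => rfl⟩

def comp {Γ₁ Γ₂ Γ₃ : CGraph C} (g : CMap Γ₂ Γ₃) (f : CMap Γ₁ Γ₂) : CMap Γ₁ Γ₃ where
  toMap := g.toMap.comp f.toMap
  hv v := by
    show Γ₃.col.vMap (g.toMap.vMap (f.toMap.vMap v)) = Γ₁.col.vMap v
    rw [g.hv, f.hv]
  he e := by
    show Γ₃.col.eMap (g.toMap.eMap (f.toMap.eMap e)) = Γ₁.col.eMap e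
    rw [g.he, f.he]

/-- A map of graphs over `C` is an isomorphism iff it is bijective on nodes and edges. -/
def IsIso {Γ Γ' : CGraph C} (φ : CMap Γ Γ') : Prop :=
  Function.Bijective φ.toMap.vMap ∧ Function.Bijective φ.toMap.eMap

theorem isIso_id (Γ : CGraph C) : (CMap.id Γ).IsIso :=
  ⟨Function.bijective_id, Function.bijective_id⟩

theorem IsIso.comp {Γ₁ Γ₂ Γ₃ : CGraph C} {g : CMap Γ₂ Γ₃} {f : CMap Γ₁ Γ₂}
    (hg : g.IsIso) (hf : f.IsIso) : (g.comp f).IsIso :=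
  ⟨hg.1.comp hf.1, hg.2.comp hf.2⟩

end CMap

variable {C : DGraph}

/-- The set of edges of `Γ` with target `a`; these are both the edges and the
leaves of the input tree `I(a)`. -/
abbrev inEdge (Γ : CGraph C) (a : Γ.gr.V) : Type := {e : Γ.gr.E // Γ.gr.t e = a}

/-- The input tree `I(a)` of a node `a` of a graph `Γ` over `C`, as a graph over `C`. -/
def inTree (Γ : CGraph C) (a : Γ.gr.V) : CGraph C where
  gr :=
    { V := Unit ⊕ inEdge Γ a
      E := inEdge Γ a
      s := Sum.inr
      t := fun _ => Sum.inl () }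
  col :=
    { vMap := Sum.elim (fun _ => Γ.col.vMap a) (fun e => Γ.col.vMap (Γ.gr.s e.1))
      eMap := fun e => Γ.col.eMap e.1
      hs := fun e => Γ.col.hs e.1
      ht := fun e => by
        show C.t (Γ.col.eMap e.1) = Γ.col.vMap a
        rw [Γ.col.ht e.1, e.2] }

/-- The edge map `I(a) → I(φ(a))` induced by a map `φ` of graphs over `C`. -/
def liftEdge {Γ Γ' : CGraph C} (φ : CMap Γ Γ') (a : Γ.gr.V) (e : inEdge Γ a) :
    inEdge Γ' (φ.toMap.vMap a) :=
  ⟨φ.toMap.eMap e.1, by rw [φ.toMap.ht, e.2]⟩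

/-- The map of input trees `φ_a : I(a) → I(φ(a))` induced by a map `φ` of graphs over `C`. -/
def inMap {Γ Γ' : CGraph C} (φ : CMap Γ Γ') (a : Γ.gr.V) :
    CMap (inTree Γ a) (inTree Γ' (φ.toMap.vMap a)) where
  toMap :=
    { vMap := Sum.elim (fun _ => Sum.inl ()) (fun e => Sum.inr (liftEdge φ a e))
      eMap := liftEdge φ a
      hs := fun _ => rfl
      ht := fun _ => rfl }
  hv v := by
    cases v with
    | inl u => exact φ.hv a
    | inr e =>
      show Γ'.col.vMap (Γ'.gr.s (φ.toMap.eMap e.1)) = Γ.col.vMap (Γ.gr.s e.1)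
      rw [φ.toMap.hs, φ.hv]
  he e := φ.he e.1

/-- A map of graphs over `C` is *étale* if the induced maps of input trees are all
isomorphisms of graphs over `C`. -/
def IsEtale {Γ Γ' : CGraph C} (φ : CMap Γ Γ') : Prop :=
  ∀ a : Γ.gr.V, (inMap φ a).IsIso

section TreeLemmas

variable {Γ Γ' : CGraph C} {a : Γ.gr.V} {b : Γ'.gr.V}

theorem CMap.vMap_inr (σ : CMap (inTree Γ a) (inTree Γ' b)) (e : inEdge Γ a) :
    σ.toMap.vMap (Sum.inr e) = Sum.inr (σ.toMap.eMap e) :=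
  (σ.toMap.hs e).symm

/-- Maps of input trees preserve the colors of the sources of the leaves. -/
theorem leafColor (σ : CMap (inTree Γ a) (inTree Γ' b)) (e : inEdge Γ a) :
    Γ'.col.vMap (Γ'.gr.s (σ.toMap.eMap e).1) = Γ.col.vMap (Γ.gr.s e.1) := by
  have h := σ.hv (Sum.inr e)
  rw [CMap.vMap_inr] at h
  exact h

/-- An isomorphism of input trees maps the root to the root. -/
theorem rootFixed (σ : CMap (inTree Γ a) (inTree Γ' b)) (hσ : σ.IsIso) :
    σ.toMap.vMap (Sum.inl ()) = Sum.inl () := by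
  rcases h : σ.toMap.vMap (Sum.inl ()) with u | e'
  · cases u; rfl
  · obtain ⟨e, rfl⟩ := hσ.2.2 e'
    have ht : (Sum.inl () : Unit ⊕ inEdge Γ' b) = σ.toMap.vMap (Sum.inl ()) := σ.toMap.ht e
    rw [h] at ht
    exact absurd ht (by simp)

/-- An isomorphism of input trees preserves the color of the root. -/
theorem rootColor (σ : CMap (inTree Γ a) (inTree Γ' b)) (hσ : σ.IsIso) :
    Γ'.col.vMap b = Γ.col.vMap a := by
  have h := σ.hv (Sum.inl ())
  rw [rootFixed σ hσ] at h
  exact h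

end TreeLemmas

/-! ### Phase spaces and control systems (Euclidean case) -/

set_option linter.unusedSectionVars false

variable (P : C.V → Type)
variable [∀ c, NormedAddCommGroup (P c)] [∀ c, NormedSpace ℝ (P c)]
  [∀ c, FiniteDimensional ℝ (P c)]

/-- Transport along an equality of colors. -/
def pcast {c c' : C.V} (h : c = c') : P c ≃ₗ[ℝ] P c' := by
  subst h; exact LinearEquiv.refl ℝ (P c)

/-- The (linear) map `ℙ f : ℙ X → ℙ Y` induced by a map `f : Y → X` of sets over the
set of colors. -/
def phasePull {X Y : Type} (α : X → C.V) (β : Y → C.V) (f : Y → X)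
    (hc : ∀ y, α (f y) = β y) :
    (∀ x, P (α x)) →ₗ[ℝ] (∀ y, P (β y)) where
  toFun v y := pcast P (hc y) (v (f y))
  map_add' u v := by funext y; simp
  map_smul' r v := by funext y; simp

theorem pcast_contDiff {c c' : C.V} (h : c = c') :
    ContDiff ℝ (⊤ : ℕ∞) (pcast P h) := by
  subst h; exact contDiff_id

theorem phasePull_contDiff {X Y : Type} [Fintype X] [Fintype Y]
    (α : X → C.V) (β : Y → C.V) (f : Y → X) (hc : ∀ y, α (f y) = β y) :
    ContDiff ℝ (⊤ : ℕ∞) (phasePull P α β f hc) :=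
  contDiff_pi.2 fun y =>
    (pcast_contDiff P (hc y)).comp
      ((ContinuousLinearMap.proj (R := ℝ) (φ := fun x => P (α x)) (f y)).contDiff)

/-- The vector space of smooth maps between two Euclidean spaces, as a submodule of the
space of all maps. -/
def SmoothMaps (V W : Type) [NormedAddCommGroup V] [NormedSpace ℝ V]
    [NormedAddCommGroup W] [NormedSpace ℝ W] : Submodule ℝ (V → W) where
  carrier := {f | ContDiff ℝ (⊤ : ℕ∞) f}
  add_mem' := fun {f g} hf hg => by
    simp only [Set.mem_setOf_eq] at *
    exact hf.add hg
  zero_mem' := by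
    simp only [Set.mem_setOf_eq]
    exact contDiff_const
  smul_mem' := fun c f hf => by
    simp only [Set.mem_setOf_eq] at *
    exact hf.const_smul c

theorem mem_smoothMaps_iff {V W : Type} [NormedAddCommGroup V] [NormedSpace ℝ V]
    [NormedAddCommGroup W] [NormedSpace ℝ W] (f : V → W) :
    f ∈ SmoothMaps V W ↔ ContDiff ℝ (⊤ : ℕ∞) f := Iff.rfl

noncomputable instance instFintypeInEdge (Γ : CGraph C) [Fintype Γ.gr.E] (a : Γ.gr.V) :
    Fintype (inEdge Γ a) := Fintype.ofFinite _

/-- The phase space `ℙ(lv I(a))` of the leaves of the input tree of `a`. -/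
abbrev LeafSpace (Γ : CGraph C) (a : Γ.gr.V) : Type :=
  ∀ e : inEdge Γ a, P (Γ.col.vMap (Γ.gr.s e.1))

/-- The space of control systems associated to the input tree of a node `a`:
all smooth maps from the phase space of the leaves to the phase space of the root. -/
noncomputable def Ctrl (Γ : CGraph C) [Fintype Γ.gr.E] (a : Γ.gr.V) :
    Submodule ℝ (LeafSpace P Γ a → P (Γ.col.vMap a)) :=
  SmoothMaps _ _

/-- The map `ℙ(σ|_{lv}) : ℙ(lv I(b)) → ℙ(lv I(a))` induced by a map of input trees
`σ : I(a) → I(b)`. -/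
noncomputable def leafPull {Γ Γ' : CGraph C} [Fintype Γ.gr.E] [Fintype Γ'.gr.E]
    {a : Γ.gr.V} {b : Γ'.gr.V} (σ : CMap (inTree Γ a) (inTree Γ' b)) :
    LeafSpace P Γ' b →ₗ[ℝ] LeafSpace P Γ a :=
  phasePull P (fun e' : inEdge Γ' b => Γ'.col.vMap (Γ'.gr.s e'.1))
    (fun e : inEdge Γ a => Γ.col.vMap (Γ.gr.s e.1)) σ.toMap.eMap (leafColor σ)

theorem leafPull_contDiff {Γ Γ' : CGraph C} [Fintype Γ.gr.E] [Fintype Γ'.gr.E]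
    {a : Γ.gr.V} {b : Γ'.gr.V} (σ : CMap (inTree Γ a) (inTree Γ' b)) :
    ContDiff ℝ (⊤ : ℕ∞) (leafPull P σ) :=
  phasePull_contDiff P _ _ _ _

/-- The action `Ctrl(σ) X = X ∘ ℙ(σ|_{lv})` of an isomorphism of input trees on
control systems. -/
noncomputable def ctrlMap {Γ Γ' : CGraph C} [Fintype Γ.gr.E] [Fintype Γ'.gr.E]
    {a : Γ.gr.V} {b : Γ'.gr.V}
    (σ : CMap (inTree Γ a) (inTree Γ' b)) (hσ : σ.IsIso) :
    ↥(Ctrl P Γ a) →ₗ[ℝ] ↥(Ctrl P Γ' b) where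
  toFun X :=
    ⟨fun v => pcast P (rootColor σ hσ).symm (X.1 (leafPull P σ v)),
      by
        have hX : ContDiff ℝ (⊤ : ℕ∞) X.1 := X.2
        exact (pcast_contDiff P (rootColor σ hσ).symm).comp
          (hX.comp (leafPull_contDiff P σ))⟩
  map_add' X Y := by
    apply Subtype.ext
    funext v
    simp
  map_smul' r X := by
    apply Subtype.ext
    funext v
    simp

/-- The space of virtual groupoid-invariant vector fields on a finite graph over `C`:
the invariants (limit) of the action of the symmetry groupoid `G(Γ)` on the spaces of
control systems of the input trees. -/
noncomputable def VSpace (Γ : CGraph C) [Fintype Γ.gr.E] :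
    Submodule ℝ (∀ a : Γ.gr.V, ↥(Ctrl P Γ a)) where
  carrier := {X | ∀ (a b : Γ.gr.V) (σ : CMap (inTree Γ a) (inTree Γ b)) (hσ : σ.IsIso),
    ctrlMap P σ hσ (X a) = X b}
  add_mem' := fun hX hY a b σ hσ => by
    simp only [Set.mem_setOf_eq] at *
    simp only [Pi.add_apply, map_add]
    rw [hX a b σ hσ, hY a b σ hσ]
  zero_mem' := fun a b σ hσ => by simp
  smul_mem' := fun r X hX a b σ hσ => by
    simp only [Set.mem_setOf_eq] at *
    simp only [Pi.smul_apply, map_smul]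
    rw [hX a b σ hσ]

/-- The canonical projection `ϖ_a : 𝕍(Γ) → Ctrl(I(a))`. -/
noncomputable def Vproj (Γ : CGraph C) [Fintype Γ.gr.E] (a : Γ.gr.V) :
    ↥(VSpace P Γ) →ₗ[ℝ] ↥(Ctrl P Γ a) :=
  (LinearMap.proj a).comp (VSpace P Γ).subtype

/-- The total phase space `ℙ Γ₀` of a graph over `C`. -/
abbrev TotalPhase (Γ : CGraph C) : Type := ∀ a : Γ.gr.V, P (Γ.col.vMap a)

/-- The map `ℙ(ξ|_{lv I(a)}) : ℙ Γ₀ → ℙ lv I(a)` induced by the canonical map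
`ξ : I(a) → Γ`. -/
noncomputable def leafRestrict (Γ : CGraph C) [Fintype Γ.gr.E] (a : Γ.gr.V) :
    TotalPhase P Γ →ₗ[ℝ] LeafSpace P Γ a :=
  phasePull P Γ.col.vMap (fun e : inEdge Γ a => Γ.col.vMap (Γ.gr.s e.1))
    (fun e : inEdge Γ a => Γ.gr.s e.1) (fun _ => rfl)

/-- The space of (smooth) vector fields on the total phase space of `Γ`. -/
noncomputable def VF (Γ : CGraph C) [Fintype Γ.gr.V] :
    Submodule ℝ (TotalPhase P Γ → TotalPhase P Γ) :=
  SmoothMaps _ _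

/-- The map `S_Γ` sending a virtual groupoid-invariant vector field to an actual
vector field on the phase space `ℙ Γ₀`; its component at a node `a` is
`ϖ_a(v) ∘ ℙ(ξ|_{lv I(a)})`. -/
noncomputable def SMap (Γ : CGraph C) [Fintype Γ.gr.E] [Fintype Γ.gr.V] :
    ↥(VSpace P Γ) →ₗ[ℝ] ↥(VF P Γ) where
  toFun v :=
    ⟨fun x a => (v.1 a).1 (leafRestrict P Γ a x),
      contDiff_pi.2 fun a =>
        ContDiff.comp (show ContDiff ℝ (⊤ : ℕ∞) (v.1 a).1 from (v.1 a).2)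
          (phasePull_contDiff P _ _ _ _)⟩
  map_add' u v := by
    apply Subtype.ext
    funext x a
    simp
  map_smul' r v := by
    apply Subtype.ext
    funext x a
    simp

/-- The map `ℙ φ : ℙ Γ'₀ → ℙ Γ₀` on total phase spaces induced by a map
`φ : Γ → Γ'` of graphs over `C`.  It is linear. -/
noncomputable def totalPull {Γ Γ' : CGraph C} (φ : CMap Γ Γ') :
    TotalPhase P Γ' →ₗ[ℝ] TotalPhase P Γ :=
  phasePull P Γ'.col.vMap Γ.col.vMap φ.toMap.vMap φ.hv

section PhaseMaps

variable {C : DGraph} (P : C.V → Type) [∀ c, NormedAddCommGroup (P c)]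
  [∀ c, NormedSpace ℝ (P c)]

@[simp]
theorem pcast_self {c : C.V} (h : c = c) (y : P c) : pcast P h y = y :=
  rfl

@[simp]
theorem pcast_pcast {c c' c'' : C.V} (h : c = c') (h' : c' = c'') (y : P c) :
    pcast P h' (pcast P h y) = pcast P (h.trans h') y := by
  subst h h'
  rfl

theorem pcast_apply_congr {ι : Type} {α : ι → C.V} (x : ∀ i, P (α i)) {i j : ι} (hij : i = j)
    {c : C.V} (hi : α i = c) (hj : α j = c) : pcast P hi (x i) = pcast P hj (x j) := by
  subst hij
  rfl

theorem phasePull_apply {X Y : Type} (α : X → C.V) (β : Y → C.V) (f : Y → X)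
    (hc : ∀ y, α (f y) = β y) (v : ∀ x, P (α x)) (y : Y) :
    phasePull P α β f hc v y = pcast P (hc y) (v (f y)) :=
  rfl

theorem totalPull_apply {Γ Γ' : CGraph C} (φ : CMap Γ Γ') (x : TotalPhase P Γ') (a : Γ.gr.V) :
    totalPull P φ x a = pcast P (φ.hv a) (x (φ.toMap.vMap a)) :=
  rfl

theorem leafRestrict_totalPull {Γ Γ' : CGraph C} [Fintype Γ.gr.E] [Fintype Γ'.gr.E]
    (φ : CMap Γ Γ') (a : Γ.gr.V) (x : TotalPhase P Γ') :
    leafRestrict P Γ a (totalPull P φ x) =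
      leafPull P (inMap φ a) (leafRestrict P Γ' (φ.toMap.vMap a) x) := by
  funext e
  simp only [leafRestrict, totalPull, leafPull, phasePull_apply, pcast_pcast]
  exact pcast_apply_congr P x (φ.toMap.hs e.1).symm _ _

end PhaseMaps

theorem SMap_apply (Γ : CGraph C) [Fintype Γ.gr.E] [Fintype Γ.gr.V] (v : ↥(VSpace P Γ))
    (x : TotalPhase P Γ) (a : Γ.gr.V) :
    (SMap P Γ v).1 x a = (v.1 a).1 (leafRestrict P Γ a x) :=
  rfl

theorem apply_leafPull_of_ctrlMap_eq {Γ Γ' : CGraph C} [Fintype Γ.gr.E] [Fintype Γ'.gr.E]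
    {a : Γ.gr.V} {b : Γ'.gr.V} {σ : CMap (inTree Γ a) (inTree Γ' b)} (hσ : σ.IsIso)
    {X : ↥(Ctrl P Γ a)} {Y : ↥(Ctrl P Γ' b)} (h : ctrlMap P σ hσ X = Y) (u : LeafSpace P Γ' b) :
    X.1 (leafPull P σ u) = pcast P (rootColor σ hσ) (Y.1 u) := by
  subst h
  show _ = pcast P _ (pcast P _ _)
  rw [pcast_pcast, pcast_self]

/-- Let `φ : Γ → Γ'` be an étale map of finite graphs over `C` and
`w ∈ 𝕍(Γ')` a virtual groupoid-invariant vector field.  Then the vector fields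
`S_{Γ'}(w)` on `ℙΓ'₀` and `S_Γ(𝕍(φ)w)` on `ℙΓ₀` are `ℙφ`-related: since `ℙφ` is
linear (so that its derivative is itself), `ℙφ(S_{Γ'}(w)(x)) = S_Γ(𝕍(φ)w)(ℙφ(x))`
for every `x ∈ ℙΓ'₀`; i.e. `ℙφ` is a map of dynamical systems.
Here `v = 𝕍(φ)w` is characterized by `ϖ_a(v) = Ctrl(φ_a)⁻¹(ϖ_{φ(a)}(w))` for all
nodes `a` of `Γ`. -/
theorem Pmap_relates_groupoid_invariant_vector_fields {C : DGraph} (P : C.V → Type)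
    [∀ c, NormedAddCommGroup (P c)] [∀ c, NormedSpace ℝ (P c)]
    [∀ c, FiniteDimensional ℝ (P c)]
    {Γ Γ' : CGraph C} [Fintype Γ.gr.E] [Fintype Γ'.gr.E]
    [Fintype Γ.gr.V] [Fintype Γ'.gr.V]
    (φ : CMap Γ Γ') (hφ : IsEtale φ)
    (w : ↥(VSpace P Γ')) (v : ↥(VSpace P Γ))
    (hv : ∀ a : Γ.gr.V,
      ctrlMap P (inMap φ a) (hφ a) (Vproj P Γ a v) = Vproj P Γ' (φ.toMap.vMap a) w) :
    ∀ x : TotalPhase P Γ',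
      totalPull P φ ((SMap P Γ' w).1 x) = (SMap P Γ v).1 (totalPull P φ x) := by
  intro x
  funext a
  rw [totalPull_apply, SMap_apply, SMap_apply, leafRestrict_totalPull]
  -- `rootColor (inMap φ a) (hφ a)` and `φ.hv a` prove the same equation of colours.
  exact (apply_leafPull_of_ctrlMap_eq P (hφ a) (hv a) _).symm
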